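/- For all real numbers s and t with t > 0 and s > 1 + t, the series ∑_{n≥1} R(n)^t · ln R(n) / n^s converges and equals T(s,t) · ∑_{n≥1} R(n)^t / n^s. -/

import Mathlib

/-!
Write `a n = R(n)^t / n^s` and `F = ∑ a n`. Since `ln R(n) = ∑_{p ∣ n} ln p`, swapping the two
(nonnegative) summations turns the series into `∑_p ln p · D_p` with `D_p = ∑_{p ∣ n} a n`.
The substitution `n ↦ p n` computes `D_p`: `R(p n)` is `R(n)` when `p ∣ n` and `p R(n)`
otherwise, so `p^s D_p = D_p + p^t (F - D_p)`, i.e. `D_p = p^t / (p^s - 1 + p^t) · F`.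
-/

open scoped BigOperators

/-- The radical of a natural number: the product of its distinct prime factors. -/
def rad (n : ℕ) : ℕ := ∏ p ∈ n.primeFactors, p

/-- `S s t = ∑_p (p^s/(p^s − 1)) · (p^t/(p^s − 1 + p^t)) · ln p` over all primes `p`. -/
noncomputable def S (s t : ℝ) : ℝ :=
  ∑' p : Nat.Primes, (((p : ℕ) : ℝ) ^ s / (((p : ℕ) : ℝ) ^ s - 1)) *
    (((p : ℕ) : ℝ) ^ t / (((p : ℕ) : ℝ) ^ s - 1 + ((p : ℕ) : ℝ) ^ t)) *
    Real.log ((p : ℕ) : ℝ)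

/-- `T s t = ∑_p (p^t/(p^s − 1 + p^t)) · ln p` over all primes `p`. -/
noncomputable def T (s t : ℝ) : ℝ :=
  ∑' p : Nat.Primes, (((p : ℕ) : ℝ) ^ t / (((p : ℕ) : ℝ) ^ s - 1 + ((p : ℕ) : ℝ) ^ t)) *
    Real.log ((p : ℕ) : ℝ)

lemma rad_pos (n : ℕ) : 0 < rad n :=
  Finset.prod_pos fun _ hp => (Nat.prime_of_mem_primeFactors hp).pos

lemma rad_le_self {n : ℕ} (hn : n ≠ 0) : rad n ≤ n :=
  Nat.le_of_dvd (Nat.pos_of_ne_zero hn) (Nat.prod_primeFactors_dvd n)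

lemma rad_prime_mul_of_dvd {p n : ℕ} (hp : p.Prime) (h : p ∣ n) : rad (p * n) = rad n := by
  rcases eq_or_ne n 0 with rfl | hn
  · simp
  rw [rad, rad, Nat.primeFactors_mul hp.ne_zero hn, hp.primeFactors, Finset.singleton_union,
    Finset.insert_eq_of_mem (Nat.mem_primeFactors.2 ⟨hp, h, hn⟩)]

lemma rad_prime_mul_of_not_dvd {p n : ℕ} (hp : p.Prime) (h : ¬p ∣ n) :
    rad (p * n) = p * rad n := by
  have hn : n ≠ 0 := by rintro rfl; exact h (dvd_zero p)
  rw [rad, rad, Nat.primeFactors_mul hp.ne_zero hn, hp.primeFactors, Finset.singleton_union,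
    Finset.prod_insert fun hmem => h (Nat.dvd_of_mem_primeFactors hmem)]

lemma log_rad (n : ℕ) : Real.log (rad n) = ∑ p ∈ n.primeFactors, Real.log p := by
  rw [rad, Nat.cast_prod, Real.log_prod]
  exact fun p hp => Nat.cast_ne_zero.2 (Nat.prime_of_mem_primeFactors hp).ne_zero

lemma hasSum_ite_dvd_log_prime {n : ℕ} (hn : n ≠ 0) :
    HasSum (fun p : Nat.Primes => if (p : ℕ) ∣ n then Real.log p else 0)
      (Real.log (rad n)) := by
  set f : ℕ → ℝ := fun p => if p ∈ n.primeFactors then Real.log p else 0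
  have hf : HasSum f (Real.log (rad n)) := by
    have h : HasSum f _ := hasSum_sum_of_ne_finset_zero (s := n.primeFactors) fun p hp => if_neg hp
    rwa [Finset.sum_congr rfl fun p hp => if_pos hp, ← log_rad] at h
  have hsupp : ∀ p, p ∉ Set.range ((↑) : Nat.Primes → ℕ) → f p = 0 := fun p hp =>
    if_neg fun hmem => hp ⟨⟨p, Nat.prime_of_mem_primeFactors hmem⟩, rfl⟩
  have h : HasSum (fun p : Nat.Primes => f p) (Real.log (rad n)) :=
    (Nat.Primes.coe_nat_injective.hasSum_iff hsupp).2 hf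
  convert h using 2 with p
  simp [f, Nat.mem_primeFactors, p.2, hn]

lemma PNat.tsum_mul_left_eq_tsum_indicator_dvd {α : Type*} [AddCommMonoid α] [TopologicalSpace α]
    (f : ℕ+ → α) (k : ℕ+) : ∑' n, f (k * n) = ∑' n, {n | k ∣ n}.indicator f n := by
  have hinj : Function.Injective (k * ·) := fun _ _ h => mul_left_cancel h
  rw [← hinj.tsum_eq (f := {n | k ∣ n}.indicator f)]
  · exact tsum_congr fun n =>
      (Set.indicator_of_mem (show k * n ∈ {n | k ∣ n} from dvd_mul_right k n) f).symm
  · intro n hn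
    obtain ⟨m, rfl⟩ := Set.mem_of_indicator_ne_zero hn
    exact ⟨m, rfl⟩

noncomputable def radTerm (s t : ℝ) (n : ℕ+) : ℝ := (rad n : ℝ) ^ t / (n : ℝ) ^ s

lemma radTerm_nonneg (s t : ℝ) (n : ℕ+) : 0 ≤ radTerm s t n := by
  unfold radTerm; positivity

section PrimeMul

variable (s t : ℝ) (p : Nat.Primes) (n : ℕ+)

lemma radTerm_prime_mul_of_dvd (h : (p : ℕ+) ∣ n) :
    radTerm s t (p * n) = radTerm s t n / ((p : ℕ) : ℝ) ^ s := by
  rw [PNat.dvd_iff, Nat.Primes.coe_pnat_nat] at h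
  have hp : (0 : ℝ) ≤ ((p : ℕ) : ℝ) := Nat.cast_nonneg _
  simp only [radTerm, PNat.mul_coe, Nat.Primes.coe_pnat_nat, rad_prime_mul_of_dvd p.2 h]
  push_cast
  rw [Real.mul_rpow hp (Nat.cast_nonneg _)]
  ring

lemma radTerm_prime_mul_of_not_dvd (h : ¬(p : ℕ+) ∣ n) :
    radTerm s t (p * n) = ((p : ℕ) : ℝ) ^ t * radTerm s t n / ((p : ℕ) : ℝ) ^ s := by
  rw [PNat.dvd_iff, Nat.Primes.coe_pnat_nat] at h
  have hp : (0 : ℝ) ≤ ((p : ℕ) : ℝ) := Nat.cast_nonneg _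
  simp only [radTerm, PNat.mul_coe, Nat.Primes.coe_pnat_nat, rad_prime_mul_of_not_dvd p.2 h]
  push_cast
  rw [Real.mul_rpow hp (Nat.cast_nonneg _), Real.mul_rpow hp (Nat.cast_nonneg _)]
  ring

end PrimeMul

lemma summable_radTerm {s t : ℝ} (ht : 0 ≤ t) (hs : 1 + t < s) : Summable (radTerm s t) := by
  have hdom : Summable fun n : ℕ+ => ((n : ℕ) : ℝ) ^ (t - s) :=
    (Real.summable_nat_rpow.2 (by linarith)).comp_injective PNat.coe_injective
  refine hdom.of_nonneg_of_le (radTerm_nonneg s t) fun n => ?_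
  have hn : (0 : ℝ) < (n : ℕ) := by exact_mod_cast n.pos
  rw [Real.rpow_sub hn, radTerm]
  gcongr
  exact_mod_cast rad_le_self n.ne_zero

lemma summable_radTerm_mul_log_rad {s t : ℝ} (ht : 0 ≤ t) (hs : 1 + t < s) :
    Summable fun n => radTerm s t n * Real.log (rad n) := by
  obtain ⟨ε, hε, hεs⟩ : ∃ ε : ℝ, 0 < ε ∧ 1 + (t + ε) < s :=
    ⟨(s - t - 1) / 2, by linarith, by linarith⟩
  refine ((summable_radTerm (by linarith) hεs).div_const ε).of_nonneg_of_le
    (fun n => mul_nonneg (radTerm_nonneg s t n) (Real.log_natCast_nonneg _)) fun n => ?_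
  have hr : (0 : ℝ) < rad n := by exact_mod_cast rad_pos n
  calc radTerm s t n * Real.log (rad n) ≤ radTerm s t n * ((rad n : ℝ) ^ ε / ε) := by
        gcongr
        · exact radTerm_nonneg s t n
        · exact Real.log_le_rpow_div hr.le hε
    _ = radTerm s (t + ε) n / ε := by
        rw [radTerm, radTerm, Real.rpow_add hr]
        ring

lemma tsum_indicator_dvd_radTerm {s t : ℝ} (hs : 0 ≤ s) (hsum : Summable (radTerm s t))
    (p : Nat.Primes) :
    ∑' n, {n | (p : ℕ+) ∣ n}.indicator (radTerm s t) n =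
      ((p : ℕ) : ℝ) ^ t / (((p : ℕ) : ℝ) ^ s - 1 + ((p : ℕ) : ℝ) ^ t) *
        ∑' n, radTerm s t n := by
  set M := {n : ℕ+ | (p : ℕ+) ∣ n}
  set D := ∑' n, M.indicator (radTerm s t) n
  set C := ∑' n, Mᶜ.indicator (radTerm s t) n
  have hsplit : D + C = ∑' n, radTerm s t n := by
    rw [← (hsum.indicator M).tsum_add (hsum.indicator Mᶜ)]
    simp only [Set.indicator_self_add_compl_apply]
  have hmul : ∀ n, radTerm s t (p * n) =
      (M.indicator (radTerm s t) n + ((p : ℕ) : ℝ) ^ t * Mᶜ.indicator (radTerm s t) n) /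
        ((p : ℕ) : ℝ) ^ s := by
    intro n
    by_cases h : (p : ℕ+) ∣ n
    · simp [M, h, radTerm_prime_mul_of_dvd]
    · simp [M, h, radTerm_prime_mul_of_not_dvd]
  have hself : D = (D + ((p : ℕ) : ℝ) ^ t * C) / ((p : ℕ) : ℝ) ^ s := calc
    D = ∑' n, radTerm s t (p * n) := (PNat.tsum_mul_left_eq_tsum_indicator_dvd _ _).symm
    _ = _ := by
      rw [tsum_congr hmul, tsum_div_const,
        (hsum.indicator M).tsum_add ((hsum.indicator Mᶜ).mul_left _), tsum_mul_left]
  have hp1 : (1 : ℝ) ≤ ((p : ℕ) : ℝ) ^ s :=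
    Real.one_le_rpow (by exact_mod_cast p.2.one_lt.le) hs
  have hpt : (0 : ℝ) < ((p : ℕ) : ℝ) ^ t := by
    have := p.2.pos
    positivity
  rw [eq_div_iff (by positivity)] at hself
  rw [← hsplit, div_mul_eq_mul_div, eq_div_iff (by linarith)]
  linear_combination hself

lemma tsum_radTerm_mul_log_rad {s t : ℝ} (ht : 0 ≤ t) (hs : 1 + t < s) :
    ∑' n, radTerm s t n * Real.log (rad n) = T s t * ∑' n, radTerm s t n := by
  have hsum := summable_radTerm ht hs
  set f : ℕ+ → Nat.Primes → ℝ := fun n p =>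
    if (p : ℕ) ∣ n then radTerm s t n * Real.log p else 0
  have hrow : ∀ n, HasSum (f n) (radTerm s t n * Real.log (rad n)) := fun n => by
    simpa only [f, mul_ite, mul_zero] using
      (hasSum_ite_dvd_log_prime n.ne_zero).mul_left (radTerm s t n)
  have hcol : ∀ p : Nat.Primes, HasSum (fun n => f n p)
      (((p : ℕ) : ℝ) ^ t / (((p : ℕ) : ℝ) ^ s - 1 + ((p : ℕ) : ℝ) ^ t) * Real.log p *
        ∑' n, radTerm s t n) := fun p => by
    have h := (hsum.indicator {n | (p : ℕ+) ∣ n}).hasSum.mul_right (Real.log p)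
    rw [tsum_indicator_dvd_radTerm (by linarith) hsum, mul_right_comm] at h
    refine h.congr_fun fun n => ?_
    simp [f, Set.indicator_apply, PNat.dvd_iff, Nat.Primes.coe_pnat_nat]
  have hf : Summable (Function.uncurry f) := by
    refine (summable_prod_of_nonneg fun x => ?_).2 ⟨fun n => (hrow n).summable,
      (summable_radTerm_mul_log_rad ht hs).congr fun n => (hrow n).tsum_eq.symm⟩
    simp only [Function.uncurry, f]
    split_ifs
    · exact mul_nonneg (radTerm_nonneg s t _) (Real.log_natCast_nonneg _)
    · exact le_rfl
  calc ∑' n, radTerm s t n * Real.log (rad n) = ∑' n, ∑' p, f n p :=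
        tsum_congr fun n => (hrow n).tsum_eq.symm
    _ = ∑' p, ∑' n, f n p := hf.tsum_comm.symm
    _ = T s t * ∑' n, radTerm s t n := by
        rw [tsum_congr fun p => (hcol p).tsum_eq, tsum_mul_right]
        rfl

theorem stmt_7 (s t : ℝ) (ht : 0 < t) (hs : 1 + t < s) :
    Summable (fun n : ℕ+ => (rad n : ℝ) ^ t * Real.log (rad n : ℝ) / (n : ℝ) ^ s) ∧
    (∑' n : ℕ+, (rad n : ℝ) ^ t * Real.log (rad n : ℝ) / (n : ℝ) ^ s) =
      T s t * ∑' n : ℕ+, (rad n : ℝ) ^ t / (n : ℝ) ^ s := by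
  simp only [mul_div_right_comm _ (Real.log _), ← radTerm.eq_1]
  exact ⟨summable_radTerm_mul_log_rad ht.le hs, tsum_radTerm_mul_log_rad ht.le hs⟩
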